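/- For every n ≥ 1 and every t > 0, ∫₀^∞ [ (2π)⁻ⁿ ∫_{ℝⁿ} Tr(exp(−t a₂(ξ))) cos(2 s ξₙ) dξ ] ds = (1/4) [ (n−1) (4πμt)^{−(n−1)/2} + (4π(2μ+λ)t)^{−(n−1)/2} ], where ξₙ denotes the last coordinate of ξ. (This is the boundary heat-trace density, i.e. the coefficient of Vol(∂Ω) in the second term of the two-term asymptotics of Σ_k e^{−τ_k t}, produced by the image term K(t,x,ς(x)) in the method of images for the half-space.) -/

import Mathlib

/-!
The rank-one part `ξ ξᵀ` of `a₂(ξ)` satisfies `Tr (ξ ξᵀ)^(k+1) = |ξ|^(2(k+1))`, so in the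
exponential series it behaves like a single eigenvalue `|ξ|²`, and
`Tr exp (-t a₂(ξ)) = (n - 1) e^{-tμ|ξ|²} + e^{-t(2μ+λ)|ξ|²}`: `n - 1` shear modes and one pressure
mode. The Fourier transform of a Gaussian is a Gaussian, so each mode contributes the image term
`(2π)⁻ⁿ ∫ e^{-a|ξ|²} cos (2 s ξₙ) dξ = (4πa)^{-n/2} e^{-s²/a}`, and the half-line integral of
`e^{-s²/a}` is `√(πa) / 2`.
-/

open Matrix BigOperators Real

/-- The principal symbol of the Navier–Lamé operator:
`a₂(ξ) = μ|ξ|² Iₙ + (μ+λ) ξξᵀ`. -/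
noncomputable def a2 (n : ℕ) (μ lam : ℝ) (ξ : Fin n → ℝ) : Matrix (Fin n) (Fin n) ℝ :=
  (μ * ∑ i, ξ i ^ 2) • (1 : Matrix (Fin n) (Fin n) ℝ) +
    (μ + lam) • Matrix.of fun j k => ξ j * ξ k

open MeasureTheory

namespace Matrix

variable {m : Type*} [Fintype m] [DecidableEq m]

open scoped Nat Norms.Operator in
theorem trace_exp_of_trace_pow_succ {A : Matrix m m ℝ} {x : ℝ}
    (h : ∀ k, (A ^ (k + 1)).trace = x ^ (k + 1)) :
    (NormedSpace.exp A).trace = (Fintype.card m - 1) + Real.exp x := by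
  have hmatrix : HasSum (fun k => (k !⁻¹ : ℝ) * (A ^ k).trace) (NormedSpace.exp A).trace := by
    convert (NormedSpace.exp_series_hasSum_exp' (𝕂 := ℝ) A).map (traceAddMonoidHom m ℝ)
      continuous_id.matrix_trace using 1
    · ext k
      simp
    · rfl
  have hscalar : HasSum
      (fun k => (k !⁻¹ : ℝ) * x ^ k + if k = 0 then (Fintype.card m - 1 : ℝ) else 0)
      (Real.exp x + (Fintype.card m - 1)) := by
    simpa [Real.exp_eq_exp_ℝ] using (NormedSpace.exp_series_hasSum_exp' (𝕂 := ℝ) x).add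
      (hasSum_ite_eq 0 (Fintype.card m - 1 : ℝ))
  have hterms : (fun k => (k !⁻¹ : ℝ) * (A ^ k).trace) =
      fun k => (k !⁻¹ : ℝ) * x ^ k + if k = 0 then (Fintype.card m - 1 : ℝ) else 0 := by
    ext (_ | k) <;> simp [h]
  rw [hterms] at hmatrix
  rw [hmatrix.unique hscalar, add_comm]

theorem vecMulVec_self_pow_succ {R : Type*} [CommSemiring R] (v : m → R) (k : ℕ) :
    vecMulVec v v ^ (k + 1) = (v ⬝ᵥ v) ^ k • vecMulVec v v := by
  induction k with
  | zero => simp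
  | succ k ih =>
    rw [pow_succ, ih, smul_mul_assoc, vecMulVec_mul_vecMulVec, vecMulVec_smul, smul_smul, pow_succ]

open scoped Norms.Operator in
theorem trace_exp_smul_one_add (c : ℝ) (A : Matrix m m ℝ) :
    (NormedSpace.exp (c • 1 + A)).trace = Real.exp c * (NormedSpace.exp A).trace := by
  have hscalar : NormedSpace.exp (c • (1 : Matrix m m ℝ)) = Real.exp c • 1 := by
    have h := (NormedSpace.algebraMap_exp_comm (𝔸 := Matrix m m ℝ) c).symm
    rwa [Algebra.algebraMap_eq_smul_one, Algebra.algebraMap_eq_smul_one, ← Real.exp_eq_exp_ℝ] at h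
  rw [exp_add_of_commute _ _ ((Commute.one_left A).smul_left c), hscalar, smul_mul_assoc, one_mul,
    trace_smul, smul_eq_mul]

end Matrix

theorem trace_exp_neg_smul_a2 (n : ℕ) (μ lam t : ℝ) (ξ : Fin n → ℝ) :
    (NormedSpace.exp ((-t) • a2 n μ lam ξ)).trace = (n - 1) * Real.exp (-(t * μ) * ∑ i, ξ i ^ 2)
      + Real.exp (-(t * (2 * μ + lam)) * ∑ i, ξ i ^ 2) := by
  have hsplit : (-t) • a2 n μ lam ξ
      = (-(t * μ) * ∑ i, ξ i ^ 2) • 1 + (-(t * (μ + lam))) • vecMulVec ξ ξ := by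
    rw [a2, smul_add, smul_smul, smul_smul]
    congr 2 <;> ring
  have hpow (k : ℕ) : (((-(t * (μ + lam))) • vecMulVec ξ ξ) ^ (k + 1)).trace
      = (-(t * (μ + lam)) * ∑ i, ξ i ^ 2) ^ (k + 1) := by
    rw [smul_pow, vecMulVec_self_pow_succ, trace_smul, trace_smul, trace_vecMulVec]
    simp only [dotProduct, smul_eq_mul, ← sq, mul_pow]
    ring
  rw [hsplit, trace_exp_smul_one_add, trace_exp_of_trace_pow_succ hpow, Fintype.card_fin, mul_add,
    ← Real.exp_add]
  ring_nf

open Complex GaussianFourier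

section Gaussian

variable {ι : Type*} [Fintype ι]

theorem re_cexp_neg_mul_sum_sq_add_single [DecidableEq ι] (i₀ : ι) (a b : ℝ) (ξ : ι → ℝ) :
    (cexp (-(a : ℂ) * ∑ i, (ξ i : ℂ) ^ 2 + ∑ i, (Pi.single i₀ (b * I) : ι → ℂ) i * ξ i)).re
      = Real.exp (-a * ∑ i, ξ i ^ 2) * Real.cos (b * ξ i₀) := by
  rw [exp_re]
  simp [Pi.single_apply, ← ofReal_pow, ← ofReal_sum]

theorem integrable_exp_neg_mul_sum_sq_mul_cos (i₀ : ι) {a : ℝ} (ha : 0 < a) (b : ℝ) :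
    Integrable fun ξ : ι → ℝ => Real.exp (-a * ∑ i, ξ i ^ 2) * Real.cos (b * ξ i₀) := by
  classical
  simpa only [RCLike.re_to_complex, re_cexp_neg_mul_sum_sq_add_single] using
    (integrable_cexp_neg_mul_sum_add (b := a) (by simpa using ha) (Pi.single i₀ (b * I))).re

theorem integral_exp_neg_mul_sum_sq_mul_cos (i₀ : ι) {a : ℝ} (ha : 0 < a) (b : ℝ) :
    ∫ ξ : ι → ℝ, Real.exp (-a * ∑ i, ξ i ^ 2) * Real.cos (b * ξ i₀)
      = (π / a) ^ (Fintype.card ι / 2 : ℝ) * Real.exp (-b ^ 2 / (4 * a)) := by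
  classical
  have ha' : 0 < (a : ℂ).re := by simpa using ha
  have hre := integral_re (integrable_cexp_neg_mul_sum_add ha' (Pi.single i₀ (b * I)))
  simp only [RCLike.re_to_complex, re_cexp_neg_mul_sum_sq_add_single] at hre
  rw [hre, integral_cexp_neg_mul_sum_add ha']
  have hpow :
      ((π : ℂ) / a) ^ (Fintype.card ι / 2 : ℂ) = ((π / a) ^ (Fintype.card ι / 2 : ℝ) : ℝ) := by
    rw [ofReal_cpow (by positivity)]
    push_cast
    rfl
  have hexp : cexp (-b ^ 2 / (4 * a)) = (Real.exp (-b ^ 2 / (4 * a)) : ℝ) := by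
    push_cast
    rfl
  have hsum : ∑ i, (Pi.single i₀ (b * I) : ι → ℂ) i ^ 2 = -(b : ℂ) ^ 2 := by
    simp [Pi.single_apply, mul_pow]
  rw [hpow, hsum, hexp, ← ofReal_mul, ofReal_re]

/-- The mirror image of a point at distance `s` from the hyperplane `ξ i₀ = 0` is displaced by
`2 s` along `i₀`, so this is the image term of the heat kernel of `a |ξ|²` at time `1`. -/
noncomputable def imageHeatKernel (i₀ : ι) (a s : ℝ) : ℝ :=
  ((2 * π) ^ Fintype.card ι)⁻¹ *
    ∫ ξ : ι → ℝ, Real.exp (-a * ∑ i, ξ i ^ 2) * Real.cos (2 * s * ξ i₀)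

theorem inv_two_pi_pow_mul_rpow_half {a : ℝ} (ha : 0 < a) (n : ℕ) :
    ((2 * π) ^ n)⁻¹ * (π / a) ^ (n / 2 : ℝ) = (4 * π * a) ^ (-(n / 2 : ℝ)) := by
  have hsq : (2 * π) ^ n = (4 * π ^ 2) ^ (n / 2 : ℝ) := by
    rw [show 4 * π ^ 2 = (2 * π) ^ (2 : ℝ) by norm_num; ring, ← Real.rpow_mul (by positivity),
      mul_div_cancel₀ _ two_ne_zero, Real.rpow_natCast]
  rw [hsq, inv_mul_eq_div, ← Real.div_rpow (by positivity) (by positivity), Real.rpow_neg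
    (by positivity), ← Real.inv_rpow (by positivity)]
  congr 1
  field_simp

theorem imageHeatKernel_eq (i₀ : ι) {a : ℝ} (ha : 0 < a) (s : ℝ) :
    imageHeatKernel i₀ a s
      = (4 * π * a) ^ (-(Fintype.card ι / 2 : ℝ)) * Real.exp (-a⁻¹ * s ^ 2) := by
  rw [imageHeatKernel, integral_exp_neg_mul_sum_sq_mul_cos i₀ ha, ← mul_assoc,
    inv_two_pi_pow_mul_rpow_half ha]
  congr 2
  field_simp
  ring

theorem integrableOn_imageHeatKernel (i₀ : ι) {a : ℝ} (ha : 0 < a) :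
    IntegrableOn (imageHeatKernel i₀ a) (Set.Ioi 0) := by
  simp_rw [funext (imageHeatKernel_eq i₀ ha)]
  exact ((integrable_exp_neg_mul_sq (inv_pos.2 ha)).const_mul _).integrableOn

theorem integral_imageHeatKernel (i₀ : ι) {a : ℝ} (ha : 0 < a) :
    ∫ s in Set.Ioi 0, imageHeatKernel i₀ a s
      = 1 / 4 * (4 * π * a) ^ (-((Fintype.card ι : ℝ) - 1) / 2) := by
  have hsqrt : √(π / a⁻¹) / 2 = (4 * π * a) ^ (1 / 2 : ℝ) / 4 := by
    rw [div_inv_eq_mul, ← Real.sqrt_eq_rpow, show 4 * π * a = 2 ^ 2 * (π * a) by ring,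
      Real.sqrt_mul (by positivity : (0 : ℝ) ≤ 2 ^ 2), Real.sqrt_sq two_pos.le]
    ring
  simp_rw [imageHeatKernel_eq i₀ ha]
  rw [integral_const_mul, integral_gaussian_Ioi, hsqrt, mul_div_assoc',
    ← Real.rpow_add (by positivity)]
  ring_nf

end Gaussian

theorem inv_two_pi_pow_mul_integral_trace_exp_a2_mul_cos {n : ℕ} (i₀ : Fin n) {μ lam t : ℝ}
    (hshear : 0 < t * μ) (hpressure : 0 < t * (2 * μ + lam)) (s : ℝ) :
    ((2 * π) ^ n)⁻¹ * ∫ ξ : Fin n → ℝ,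
        (NormedSpace.exp ((-t) • a2 n μ lam ξ)).trace * Real.cos (2 * s * ξ i₀)
      = (n - 1) * imageHeatKernel i₀ (t * μ) s + imageHeatKernel i₀ (t * (2 * μ + lam)) s := by
  have hpoint (ξ : Fin n → ℝ) :
      (NormedSpace.exp ((-t) • a2 n μ lam ξ)).trace * Real.cos (2 * s * ξ i₀)
        = (n - 1) * (Real.exp (-(t * μ) * ∑ i, ξ i ^ 2) * Real.cos (2 * s * ξ i₀))
          + Real.exp (-(t * (2 * μ + lam)) * ∑ i, ξ i ^ 2) * Real.cos (2 * s * ξ i₀) := by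
    rw [trace_exp_neg_smul_a2]
    ring
  simp only [hpoint]
  rw [integral_add ((integrable_exp_neg_mul_sum_sq_mul_cos i₀ hshear _).const_mul _)
    (integrable_exp_neg_mul_sum_sq_mul_cos i₀ hpressure _), integral_const_mul, imageHeatKernel,
    imageHeatKernel, Fintype.card_fin]
  ring

open NormedSpace in
/-- the boundary heat-trace density produced by the image term in the method
of images for the half-space:
∫₀^∞ (2π)⁻ⁿ ∫_{ℝⁿ} Tr(exp(−t a₂(ξ))) cos(2sξₙ) dξ ds
  = (1/4)[(n−1)(4πμt)^{−(n−1)/2} + (4π(2μ+λ)t)^{−(n−1)/2}]. -/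
theorem boundary_heat_trace_density (n : ℕ) (hn : 1 ≤ n) (μ lam : ℝ) (hμ : 0 < μ)
    (hlam : 0 ≤ lam + μ) (t : ℝ) (ht : 0 < t) :
    (∫ s in Set.Ioi (0 : ℝ),
        ((2 * π) ^ n)⁻¹ *
          ∫ ξ : Fin n → ℝ,
            (exp ((-t) • a2 n μ lam ξ)).trace * Real.cos (2 * s * ξ ⟨n - 1, by omega⟩))
      = (1 / 4) * (((n : ℝ) - 1) * (4 * π * μ * t) ^ (-((n : ℝ) - 1) / 2) +
          (4 * π * (2 * μ + lam) * t) ^ (-((n : ℝ) - 1) / 2)) := by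
  have hshear : 0 < t * μ := by positivity
  have hpressure : 0 < t * (2 * μ + lam) := by nlinarith
  simp_rw [inv_two_pi_pow_mul_integral_trace_exp_a2_mul_cos _ hshear hpressure]
  rw [integral_add ((integrableOn_imageHeatKernel _ hshear).const_mul _)
    (integrableOn_imageHeatKernel _ hpressure), integral_const_mul,
    integral_imageHeatKernel _ hshear, integral_imageHeatKernel _ hpressure, Fintype.card_fin]
  ring_nf
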